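/- arXiv:2409.16439 — 3 statements merged into one kernel-verified Lean document; each statement's English description precedes it below -/
import Mathlib

section
/- There is no belief-based reward function R : Δ(S) → ℝ such that for every HMM with controllable emissions and every observation sequence y_{0:t}, the cumulative sum ∑_{i=0..t} R(b_i) of rewards on the induced belief states equals the negative conditional entropy −H(S_0 | y_{0:t}). Concretely: in the two-state HMM with uniform prior over {0,1} and fully revealing first observation, the belief after one observation equals the belief after two observations (b_2 = b_1), yet the incremental entropy differences −H(S_0|o_0)+H(S_0|λ) = 1 and −H(S_0|o_0 o_1)+H(S_0|o_0) = 0 differ, so R(b_1) ≠ R(b_2) is forced, a contradiction. -/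
open BigOperators Finset

/-- Uniform prior over the two initial states `{0,1}`. -/
noncomputable def prior : Fin 2 → ℝ := fun _ => 1/2

/-- In the two-state revealing HMM (identity transitions, each state deterministically
emitting its own label), the likelihood `P(o_{0:n-1} | S₀ = s)` of an observation
sequence given the initial state. -/
noncomputable def seqLik (n : ℕ) (o : Fin n → Fin 2) (s : Fin 2) : ℝ :=
  ∏ k, (if o k = s then (1 : ℝ) else 0)

/-- The probability `P(o_{0:n-1})` of an observation sequence. -/
noncomputable def seqProb (n : ℕ) (o : Fin n → Fin 2) : ℝ :=
  ∑ s, prior s * seqLik n o s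

/-- The belief `b(s) = P(S₀ = s | o_{0:n-1})`, an element of the simplex `Δ({0,1})`. -/
noncomputable def belief (n : ℕ) (o : Fin n → Fin 2) : Fin 2 → ℝ :=
  fun s => prior s * seqLik n o s / seqProb n o

/-- The posterior (conditional) entropy `H(S₀ | y_{0:n-1})` of the initial state given a
realized observation sequence, in bits (binary logarithm). -/
noncomputable def postEnt (n : ℕ) (o : Fin n → Fin 2) : ℝ :=
  -∑ s, belief n o s * Real.logb 2 (belief n o s)

lemma seqProb0 (o : Fin 0 → Fin 2) : seqProb 0 o = 1 := by
  simp [seqProb, seqLik, prior, Fin.sum_univ_two]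
  try norm_num

lemma belief0 (o : Fin 0 → Fin 2) : belief 0 o = fun _ => 1/2 := by
  funext s
  simp [belief, seqLik, prior, seqProb0]

lemma postEnt0 (o : Fin 0 → Fin 2) : postEnt 0 o = 1 := by
  have : Real.logb 2 (1/2 : ℝ) = -1 := by
    rw [one_div, Real.logb_inv]; simp
  simp [postEnt, belief0, Fin.sum_univ_two, this]
  try norm_num

lemma seqLik10 (s : Fin 2) : seqLik 1 (fun _ => 0) s = if s = 0 then 1 else 0 := by
  fin_cases s <;> simp [seqLik, Fin.prod_univ_one]

lemma seqLik20 (s : Fin 2) : seqLik 2 (fun _ => 0) s = if s = 0 then 1 else 0 := by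
  fin_cases s <;> simp [seqLik, Fin.prod_univ_two]

lemma seqProb1 : seqProb 1 (fun _ => 0) = 1/2 := by
  simp [seqProb, Fin.sum_univ_two, seqLik10, prior]

lemma seqProb2 : seqProb 2 (fun _ => 0) = 1/2 := by
  simp [seqProb, Fin.sum_univ_two, seqLik20, prior]

lemma belief1 : belief 1 (fun _ => 0) = fun s => if s = 0 then 1 else 0 := by
  funext s
  simp [belief, seqLik10, seqProb1, prior]

lemma belief2 : belief 2 (fun _ => 0) = fun s => if s = 0 then 1 else 0 := by
  funext s
  simp [belief, seqLik20, seqProb2, prior]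

lemma postEnt1 : postEnt 1 (fun _ => 0) = 0 := by
  simp [postEnt, belief1, Fin.sum_univ_two]

lemma postEnt2 : postEnt 2 (fun _ => 0) = 0 := by
  simp [postEnt, belief2, Fin.sum_univ_two]

/-- Proposition 1: there is no belief-based reward `R : Δ(S) → ℝ`
whose cumulative sum over the belief states `b_0, b_1, …, b_n` induced by every possible
observation sequence equals the negative conditional entropy `−H(S₀ | y_{0:n-1})`; the
two-state revealing HMM with uniform prior furnishes a counterexample: the belief after
one observation equals the belief after two (`b₂ = b₁`) yet the incremental entropy
differences differ, forcing `R(b₁) ≠ R(b₂)`, a contradiction. -/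
theorem no_belief_based_reward :
    ¬∃ R : (Fin 2 → ℝ) → ℝ,
      ∀ (n : ℕ) (o : Fin n → Fin 2), 0 < seqProb n o →
        (∑ i : Fin (n+1),
          R (belief i (fun k => o (Fin.castLE i.is_le k)))) = -postEnt n o := by
  rintro ⟨R, hR⟩
  have h0 := hR 0 (fun k => k.elim0) (by rw [seqProb0]; norm_num)
  have h1 := hR 1 (fun _ => 0) (by rw [seqProb1]; norm_num)
  have h2 := hR 2 (fun _ => 0) (by rw [seqProb2]; norm_num)
  norm_num [Fin.sum_univ_succ] at h0 h1 h2
  have H0 : R (belief 0 (fun k => Fin.elim0 k)) = -postEnt 0 (fun k => k.elim0) := h0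
  have H1 : R (belief 0 (fun _ => 0)) + R (belief 1 (fun _ => 0))
      = -postEnt 1 (fun _ => 0) := h1
  have H2 : R (belief 0 (fun _ => 0)) + (R (belief 1 (fun _ => 0)) + R (belief 2 (fun _ => 0)))
      = -postEnt 2 (fun _ => 0) := h2
  rw [belief0, postEnt0] at H0
  rw [belief0, belief1, postEnt1] at H1
  rw [belief0, belief1, belief2, postEnt2] at H2
  linarith
end

section
/- The score function of the joint observation-action sequence under a parameterized observation-based policy is independent of the initial state: ∇_θ log P_θ(y | S_0 = s_0) = ∇_θ log P_θ(y) = ∑_{t=0..T} ∇_θ log π_θ(a_t | o_{0:t-1}), for y = (o_{0:T}, a_{0:T}) with P_θ(y | s_0) > 0 and P_θ(y) > 0. -/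
open BigOperators Finset Matrix

/-- A hidden Markov model with controllable emissions. `step s s'` is the probability
of transitioning from state `s` to state `s'`, `emit s a o` is the probability of
emitting observation `o` in state `s` under perception action `a`, and `init` is the
distribution of the initial state `S₀`. -/
structure CHMM (S O A : Type*) [Fintype S] [Fintype O] [Fintype A] where
  step : S → S → ℝ
  emit : S → A → O → ℝ
  init : S → ℝ
  step_nonneg : ∀ s s', 0 ≤ step s s'
  step_sum : ∀ s, ∑ s', step s s' = 1
  emit_nonneg : ∀ s a o, 0 ≤ emit s a o
  emit_sum : ∀ s a, ∑ o, emit s a o = 1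
  init_nonneg : ∀ s, 0 ≤ init s
  init_sum : ∑ s, init s = 1

variable {S O A : Type*} [Fintype S] [Fintype O] [Fintype A]

/-- The weight of a state path `s₀ … s_{t+1}`: at each time `i ≤ t` the state `sᵢ`
emits `oᵢ` under action `aᵢ` and then transitions to `s_{i+1}`. -/
noncomputable def pathWeight (M : CHMM S O A) (t : ℕ) (o : Fin (t+1) → O)
    (a : Fin (t+1) → A) (s : Fin (t+2) → S) : ℝ :=
  ∏ i : Fin (t+1), (M.emit (s i.castSucc) (a i) (o i) * M.step (s i.castSucc) (s i.succ))

/-- `P(o_{0:t} | a_{0:t})` when the initial state is drawn from `μ`. -/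
noncomputable def obsProbFrom (M : CHMM S O A) (μ : S → ℝ) (t : ℕ)
    (o : Fin (t+1) → O) (a : Fin (t+1) → A) : ℝ :=
  ∑ s : Fin (t+2) → S, μ (s 0) * pathWeight M t o a s

/-- `P(o_{0:t} | a_{0:t})`, the action-conditioned observation-sequence probability. -/
noncomputable def obsProb (M : CHMM S O A) (t : ℕ)
    (o : Fin (t+1) → O) (a : Fin (t+1) → A) : ℝ :=
  obsProbFrom M M.init t o a

/-- Joint probability `P_π(o_{0:t}, a_{0:t})` of the observation-action sequence in the
process induced by an observation-based policy `π` (mapping observation histories to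
action probabilities), when the initial state is drawn from `μ`. -/
noncomputable def jointProbFrom (M : CHMM S O A) (μ : S → ℝ) (π : List O → A → ℝ)
    (t : ℕ) (o : Fin (t+1) → O) (a : Fin (t+1) → A) : ℝ :=
  ∑ s : Fin (t+2) → S, μ (s 0) *
    ∏ i : Fin (t+1), (π ((List.ofFn o).take i) (a i) *
      M.emit (s i.castSucc) (a i) (o i) * M.step (s i.castSucc) (s i.succ))

/-- Joint probability `P_π(o_{0:t}, a_{0:t})` in the induced process. -/
noncomputable def jointProb (M : CHMM S O A) (π : List O → A → ℝ)
    (t : ℕ) (o : Fin (t+1) → O) (a : Fin (t+1) → A) : ℝ :=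
  jointProbFrom M M.init π t o a

/-- The observable operator `A_{o|a}`, with `(i,j)` entry `T_{i,j} · E(o | j, a)` where
`T_{i,j} = P(X_{t+1} = i | X_t = j)`. -/
noncomputable def obsOp (M : CHMM S O A) (o : O) (a : A) : Matrix S S ℝ :=
  fun i j => M.step j i * M.emit j a o

/-- The product `A_{o_t|a_t} ⋯ A_{o_0|a_0}` of observable operators. -/
noncomputable def obsOpProd [DecidableEq S] (M : CHMM S O A) (t : ℕ)
    (o : Fin (t+1) → O) (a : Fin (t+1) → A) : Matrix S S ℝ :=
  (List.ofFn (fun i : Fin (t+1) => obsOp M (o i) (a i))).reverse.prod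

/-!
Summing over state paths, the joint probability factors as
`P_θ(y | μ) = (∏ₜ π_θ(aₜ | o_{0:t-1})) · P(o_{0:T} | a_{0:T}, μ)`, where the second factor does not
depend on `θ`. Taking logarithms, it becomes an additive constant, which the gradient kills,
whatever the initial distribution `μ` (a point mass at `s₀` or `M.init`).
-/

theorem jointProbFrom_eq_prod_mul_obsProbFrom (M : CHMM S O A) (μ : S → ℝ)
    (p : List O → A → ℝ) (t : ℕ) (o : Fin (t+1) → O) (a : Fin (t+1) → A) :
    jointProbFrom M μ p t o a =
      (∏ i : Fin (t+1), p ((List.ofFn o).take i) (a i)) * obsProbFrom M μ t o a := by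
  unfold jointProbFrom obsProbFrom pathWeight
  rw [Finset.mul_sum]
  refine Finset.sum_congr rfl fun s _ => ?_
  simp_rw [mul_assoc (p _ _), Finset.prod_mul_distrib]
  ring

theorem log_jointProbFrom_eq_sum_log_add_log_obsProbFrom (M : CHMM S O A) (μ : S → ℝ)
    (p : List O → A → ℝ) (hp : ∀ h a', 0 < p h a') (t : ℕ) (o : Fin (t+1) → O)
    (a : Fin (t+1) → A) (hμ : 0 < obsProbFrom M μ t o a) :
    Real.log (jointProbFrom M μ p t o a) =
      (∑ i : Fin (t+1), Real.log (p ((List.ofFn o).take i) (a i))) +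
        Real.log (obsProbFrom M μ t o a) := by
  have hprod : ∏ i : Fin (t+1), p ((List.ofFn o).take i) (a i) ≠ 0 :=
    (Finset.prod_pos fun i _ => hp _ _).ne'
  rw [jointProbFrom_eq_prod_mul_obsProbFrom, Real.log_mul hprod hμ.ne',
    Real.log_prod fun i _ => (hp _ _).ne']

theorem obsProbFrom_pos_of_jointProbFrom_pos (M : CHMM S O A) (μ : S → ℝ)
    (p : List O → A → ℝ) (hp : ∀ h a', 0 < p h a') (t : ℕ) (o : Fin (t+1) → O)
    (a : Fin (t+1) → A) (hjoint : 0 < jointProbFrom M μ p t o a) :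
    0 < obsProbFrom M μ t o a := by
  rw [jointProbFrom_eq_prod_mul_obsProbFrom] at hjoint
  exact pos_of_mul_pos_right hjoint (Finset.prod_pos fun i _ => hp _ _).le

theorem fderiv_log_jointProbFrom {E : Type*} [NormedAddCommGroup E] [NormedSpace ℝ E]
    (M : CHMM S O A) (μ : S → ℝ) (π : E → List O → A → ℝ) (θ₀ : E)
    (hdiff : ∀ h a', DifferentiableAt ℝ (fun θ => π θ h a') θ₀)
    (hpos : ∀ θ h a', 0 < π θ h a') (t : ℕ) (o : Fin (t+1) → O) (a : Fin (t+1) → A)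
    (hjoint : 0 < jointProbFrom M μ (π θ₀) t o a) :
    fderiv ℝ (fun θ => Real.log (jointProbFrom M μ (π θ) t o a)) θ₀ =
      ∑ i : Fin (t+1), fderiv ℝ (fun θ => Real.log (π θ ((List.ofFn o).take i) (a i))) θ₀ := by
  have hobs := obsProbFrom_pos_of_jointProbFrom_pos M μ _ (hpos θ₀) t o a hjoint
  simp_rw [log_jointProbFrom_eq_sum_log_add_log_obsProbFrom M μ _ (hpos _) t o a hobs,
    fderiv_add_const]
  exact fderiv_fun_sum fun i _ => (hdiff _ _).log (hpos θ₀ _ _).ne'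

/-- Proposition 4: the score function of the joint observation-action
sequence `y = (o_{0:T}, a_{0:T})` under a differentiable positive parameterized
observation-based policy `π_θ` is independent of the initial state:
`∇_θ log P_θ(y | S₀ = s₀) = ∇_θ log P_θ(y) = ∑_{t=0}^T ∇_θ log π_θ(a_t | o_{0:t-1})`. -/
theorem score_indep_initial_state [DecidableEq S] {d : ℕ} (M : CHMM S O A)
    (π : EuclideanSpace ℝ (Fin d) → List O → A → ℝ)
    (hdiff : ∀ h a', Differentiable ℝ (fun θ => π θ h a'))
    (hpos : ∀ θ h a', 0 < π θ h a')
    (T : ℕ) (o : Fin (T+1) → O) (a : Fin (T+1) → A) (s₀ : S)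
    (θ₀ : EuclideanSpace ℝ (Fin d))
    (h1 : 0 < jointProbFrom M (Pi.single s₀ 1) (π θ₀) T o a)
    (h2 : 0 < jointProb M (π θ₀) T o a) :
    fderiv ℝ (fun θ => Real.log (jointProbFrom M (Pi.single s₀ 1) (π θ) T o a)) θ₀ =
        fderiv ℝ (fun θ => Real.log (jointProb M (π θ) T o a)) θ₀ ∧
      fderiv ℝ (fun θ => Real.log (jointProb M (π θ) T o a)) θ₀ =
        ∑ t : Fin (T+1),
          fderiv ℝ (fun θ => Real.log (π θ ((List.ofFn o).take t) (a t))) θ₀ := by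
  have hdiff₀ : ∀ h a', DifferentiableAt ℝ (fun θ => π θ h a') θ₀ := fun h a' => hdiff h a' θ₀
  have hinit := fderiv_log_jointProbFrom M M.init π θ₀ hdiff₀ hpos T o a h2
  have hpoint := fderiv_log_jointProbFrom M (Pi.single s₀ 1) π θ₀ hdiff₀ hpos T o a h1
  exact ⟨hpoint.trans hinit.symm, hinit⟩
end

section
/- Hessian formula for conditional entropy: under the assumption that the posteriors P_θ(s_0|y) are independent of θ, the Hessian satisfies ∇²_θ H(S_0|Y;θ) = E_{y~P_θ}[ H(S_0|Y=y) (∇²_θ log P_θ(y) + ∇_θ log P_θ(y) ∇_θ log P_θ(y)^T) ]; in particular if ‖∇_θ log π_θ(a|h)‖ ≤ B and ‖∇²_θ log π_θ(a|h)‖ ≤ C uniformly, then ‖∇²_θ H(S_0|Y;θ)‖ ≤ log|S_0| · ((T+1)C + (T+1)²B²), so H(S_0|Y;θ) is Lipschitz-smooth in θ. -/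
/-!
Since `y ↦ P_θ(y)` is a positive `C²` function of `θ`, the identity
`∇² p = p (∇² log p + ∇ log p ∇ log pᵀ)` turns the Hessian of `∑_y P_θ(y) h(y)` into the
stated expectation. The log-likelihood is `log g(y) + ∑_t log π_θ(a_t | h_t)`, so its gradient
and Hessian are sums of `T + 1` terms bounded by `B` and `C`; as the weights `P_θ(y) h(y)` are
nonnegative with total mass at most `log |S₀|`, the norm bound follows.
-/

open Finset

section Calculus

variable {E : Type*} [NormedAddCommGroup E] [NormedSpace ℝ E]

theorem fderiv_fderiv_eq_smul_fderiv_fderiv_log {p : E → ℝ} (hp : ContDiff ℝ 2 p)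
    (hpos : ∀ x, 0 < p x) (x : E) :
    fderiv ℝ (fun y => fderiv ℝ p y) x =
      p x • (fderiv ℝ (fun y => fderiv ℝ (fun z => Real.log (p z)) y) x +
        (fderiv ℝ (fun z => Real.log (p z)) x).smulRight
          (fderiv ℝ (fun z => Real.log (p z)) x)) := by
  have hp_diff : Differentiable ℝ p := hp.differentiable (by norm_num)
  have hlog : ContDiff ℝ 2 fun z => Real.log (p z) := hp.log fun z => (hpos z).ne'
  have hdp : ∀ y, fderiv ℝ p y = p y • fderiv ℝ (fun z => Real.log (p z)) y := fun y => by
    rw [fderiv.log (hp_diff y) (hpos y).ne', smul_smul, mul_inv_cancel₀ (hpos y).ne', one_smul]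
  have hdlog_diff : Differentiable ℝ fun y => fderiv ℝ (fun z => Real.log (p z)) y :=
    (hlog.fderiv_right (m := 1) (by norm_num)).differentiable (by norm_num)
  simp_rw [hdp]
  rw [fderiv_fun_smul (hp_diff x) (hdlog_diff x), hdp x, smul_add]
  congr 1
  ext u v
  simp [smul_smul]

theorem fderiv_fderiv_sum_mul_const {ι : Type*} (s : Finset ι) {p : ι → E → ℝ}
    (hp : ∀ i ∈ s, ContDiff ℝ 2 (p i)) (c : ι → ℝ) (x : E) :
    fderiv ℝ (fun y => fderiv ℝ (fun z => ∑ i ∈ s, p i z * c i) y) x =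
      ∑ i ∈ s, c i • fderiv ℝ (fun y => fderiv ℝ (p i) y) x := by
  have hp_diff : ∀ i ∈ s, Differentiable ℝ (p i) := fun i hi =>
    (hp i hi).differentiable (by norm_num)
  have hdp_diff : ∀ i ∈ s, Differentiable ℝ fun y => fderiv ℝ (p i) y := fun i hi =>
    ((hp i hi).fderiv_right (m := 1) (by norm_num)).differentiable (by norm_num)
  have hd : (fun y => fderiv ℝ (fun z => ∑ i ∈ s, p i z * c i) y) =
      fun y => ∑ i ∈ s, c i • fderiv ℝ (p i) y := by
    funext y
    rw [fderiv_fun_sum fun i hi => (hp_diff i hi y).mul_const _]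
    exact sum_congr rfl fun i hi => fderiv_mul_const (hp_diff i hi y) _
  rw [hd, fderiv_fun_sum fun i hi => (hdp_diff i hi x).fun_const_smul _]
  exact sum_congr rfl fun i hi => fderiv_fun_const_smul (hdp_diff i hi x) _

theorem fderiv_fderiv_sum_mul_const_eq_sum_smul_log {ι : Type*} (s : Finset ι) {p : ι → E → ℝ}
    (hp : ∀ i ∈ s, ContDiff ℝ 2 (p i)) (hpos : ∀ i ∈ s, ∀ x, 0 < p i x) (c : ι → ℝ) (x : E) :
    fderiv ℝ (fun y => fderiv ℝ (fun z => ∑ i ∈ s, p i z * c i) y) x =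
      ∑ i ∈ s, (p i x * c i) • (fderiv ℝ (fun y => fderiv ℝ (fun z => Real.log (p i z)) y) x +
        (fderiv ℝ (fun z => Real.log (p i z)) x).smulRight
          (fderiv ℝ (fun z => Real.log (p i z)) x)) := by
  rw [fderiv_fderiv_sum_mul_const s hp]
  refine sum_congr rfl fun i hi => ?_
  rw [fderiv_fderiv_eq_smul_fderiv_fderiv_log (hp i hi) (hpos i hi), smul_smul, mul_comm]

theorem fderiv_log_const_mul_prod {ι : Type*} (s : Finset ι) {c : ℝ} (hc : 0 < c)
    {f : ι → E → ℝ} (hf : ∀ i ∈ s, Differentiable ℝ (f i)) (hpos : ∀ i ∈ s, ∀ x, 0 < f i x)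
    (x : E) :
    fderiv ℝ (fun y => Real.log (c * ∏ i ∈ s, f i y)) x =
      ∑ i ∈ s, fderiv ℝ (fun y => Real.log (f i y)) x := by
  have hlog : (fun y => Real.log (c * ∏ i ∈ s, f i y)) =
      fun y => Real.log c + ∑ i ∈ s, Real.log (f i y) := by
    funext y
    rw [Real.log_mul hc.ne' (prod_pos fun i hi => hpos i hi y).ne',
      Real.log_prod fun i hi => (hpos i hi y).ne']
  rw [hlog, fderiv_const_add,
    fderiv_fun_sum fun i hi => ((hf i hi).log fun y => (hpos i hi y).ne') x]

theorem fderiv_fderiv_log_const_mul_prod {ι : Type*} (s : Finset ι) {c : ℝ} (hc : 0 < c)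
    {f : ι → E → ℝ} (hf : ∀ i ∈ s, ContDiff ℝ 2 (f i)) (hpos : ∀ i ∈ s, ∀ x, 0 < f i x)
    (x : E) :
    fderiv ℝ (fun y => fderiv ℝ (fun z => Real.log (c * ∏ i ∈ s, f i z)) y) x =
      ∑ i ∈ s, fderiv ℝ (fun y => fderiv ℝ (fun z => Real.log (f i z)) y) x := by
  have hlog_C2 : ∀ i ∈ s, ContDiff ℝ 2 fun z => Real.log (f i z) := fun i hi =>
    (hf i hi).log fun z => (hpos i hi z).ne'
  rw [funext (fderiv_log_const_mul_prod s hc (fun i hi => (hf i hi).differentiable (by norm_num))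
    hpos), fderiv_fun_sum fun i hi =>
      ((hlog_C2 i hi).fderiv_right (m := 1) (by norm_num)).differentiable (by norm_num) x]

end Calculus

theorem norm_sum_le_card_mul {ι F : Type*} [SeminormedAddCommGroup F] (s : Finset ι)
    {f : ι → F} {b : ℝ} (h : ∀ i ∈ s, ‖f i‖ ≤ b) : ‖∑ i ∈ s, f i‖ ≤ #s * b :=
  (norm_sum_le_of_le s h).trans_eq (by rw [sum_const, nsmul_eq_mul])

theorem norm_add_smulRight_self_le {E : Type*} [NormedAddCommGroup E] [NormedSpace ℝ E]
    {H : E →L[ℝ] E →L[ℝ] ℝ} {D : E →L[ℝ] ℝ} {a b : ℝ} (hH : ‖H‖ ≤ a) (hD : ‖D‖ ≤ b) :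
    ‖H + D.smulRight D‖ ≤ a + b ^ 2 :=
  calc ‖H + D.smulRight D‖ ≤ ‖H‖ + ‖D‖ ^ 2 := by
        rw [sq, ← ContinuousLinearMap.norm_smulRight_apply D D]; exact norm_add_le H (D.smulRight D)
    _ ≤ a + b ^ 2 := add_le_add hH (pow_le_pow_left₀ (norm_nonneg D) hD 2)

theorem norm_sum_mul_smul_le {ι F : Type*} [SeminormedAddCommGroup F] [NormedSpace ℝ F]
    (s : Finset ι) {w h : ι → ℝ} {M : ι → F} {L K : ℝ} (hw : ∀ i ∈ s, 0 ≤ w i)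
    (hw_sum : ∑ i ∈ s, w i = 1) (hh : ∀ i ∈ s, 0 ≤ h i) (hhL : ∀ i ∈ s, h i ≤ L)
    (hM : ∀ i ∈ s, ‖M i‖ ≤ K) :
    ‖∑ i ∈ s, (w i * h i) • M i‖ ≤ L * K :=
  calc ‖∑ i ∈ s, (w i * h i) • M i‖ ≤ ∑ i ∈ s, w i * (L * K) := by
        refine norm_sum_le_of_le s fun i hi => ?_
        rw [norm_smul, Real.norm_of_nonneg (mul_nonneg (hw i hi) (hh i hi)), mul_assoc]
        exact mul_le_mul_of_nonneg_left
          (mul_le_mul (hhL i hi) (hM i hi) (norm_nonneg _) ((hh i hi).trans (hhL i hi))) (hw i hi)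
    _ = L * K := by rw [← sum_mul, hw_sum, one_mul]

theorem hessian_condEntropy_general {d T : ℕ} {Y Hist Act S₀ : Type*} [Fintype Y] [Fintype S₀]
    (g : Y → ℝ) (hg : ∀ y, 0 < g y)
    (hist : Y → Fin (T+1) → Hist) (act : Y → Fin (T+1) → Act)
    (π : EuclideanSpace ℝ (Fin d) → Hist → Act → ℝ)
    (hπ_pos : ∀ θ h a, 0 < π θ h a)
    (hπ_C2 : ∀ h a, ContDiff ℝ 2 (fun θ => π θ h a))
    (hp_sum : ∀ θ, ∑ y, g y * ∏ t, π θ (hist y t) (act y t) = 1)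
    (hpost : Y → ℝ)
    (hpost_nonneg : ∀ y, 0 ≤ hpost y)
    (hpost_le : ∀ y, hpost y ≤ Real.log (Fintype.card S₀))
    (B C : ℝ)
    (hB : ∀ θ h a, ‖fderiv ℝ (fun θ' => Real.log (π θ' h a)) θ‖ ≤ B)
    (hC : ∀ θ h a,
      ‖fderiv ℝ (fun θ' => fderiv ℝ (fun θ'' => Real.log (π θ'' h a)) θ') θ‖ ≤ C)
    (θ₀ : EuclideanSpace ℝ (Fin d)) :
    (fderiv ℝ (fun θ => fderiv ℝ
        (fun θ' => ∑ y, (g y * ∏ t, π θ' (hist y t) (act y t)) * hpost y) θ) θ₀ =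
      ∑ y, ((g y * ∏ t, π θ₀ (hist y t) (act y t)) * hpost y) •
        (fderiv ℝ (fun θ => fderiv ℝ
            (fun θ' => Real.log (g y * ∏ t, π θ' (hist y t) (act y t))) θ) θ₀ +
          (fderiv ℝ (fun θ' => Real.log (g y * ∏ t, π θ' (hist y t) (act y t))) θ₀).smulRight
            (fderiv ℝ (fun θ' => Real.log (g y * ∏ t, π θ' (hist y t) (act y t))) θ₀))) ∧
    ‖fderiv ℝ (fun θ => fderiv ℝ
        (fun θ' => ∑ y, (g y * ∏ t, π θ' (hist y t) (act y t)) * hpost y) θ) θ₀‖ ≤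
      Real.log (Fintype.card S₀) *
        (((T : ℝ) + 1) * C + ((T : ℝ) + 1) ^ 2 * B ^ 2) := by
  have hp_pos : ∀ y θ, 0 < g y * ∏ t, π θ (hist y t) (act y t) := fun y θ =>
    mul_pos (hg y) (prod_pos fun t _ => hπ_pos θ _ _)
  have hp_C2 : ∀ y, ContDiff ℝ 2 fun θ => g y * ∏ t, π θ (hist y t) (act y t) := fun y =>
    contDiff_const.mul (contDiff_prod fun t _ => hπ_C2 _ _)
  have hess := fderiv_fderiv_sum_mul_const_eq_sum_smul_log univ (fun y _ => hp_C2 y)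
    (fun y _ => hp_pos y) hpost θ₀
  refine ⟨hess, ?_⟩
  rw [hess]
  refine norm_sum_mul_smul_le
    (F := EuclideanSpace ℝ (Fin d) →L[ℝ] EuclideanSpace ℝ (Fin d) →L[ℝ] ℝ) univ
    (fun y _ => (hp_pos y θ₀).le) (hp_sum θ₀)
    (fun y _ => hpost_nonneg y) (fun y _ => hpost_le y) fun y _ => ?_
  have hπy_diff : ∀ t ∈ univ, Differentiable ℝ fun θ => π θ (hist y t) (act y t) :=
    fun t _ => (hπ_C2 _ _).differentiable (by norm_num)
  have hπy_pos : ∀ t ∈ univ, ∀ θ, 0 < π θ (hist y t) (act y t) := fun t _ θ => hπ_pos θ _ _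
  rw [fderiv_fderiv_log_const_mul_prod univ (hg y) (fun t _ => hπ_C2 _ _) hπy_pos,
    fderiv_log_const_mul_prod univ (hg y) hπy_diff hπy_pos]
  have hH := norm_sum_le_card_mul
    (F := EuclideanSpace ℝ (Fin d) →L[ℝ] EuclideanSpace ℝ (Fin d) →L[ℝ] ℝ) univ
    fun t (_ : t ∈ univ) => hC θ₀ (hist y t) (act y t)
  have hD := norm_sum_le_card_mul (F := EuclideanSpace ℝ (Fin d) →L[ℝ] ℝ) univ
    fun t (_ : t ∈ univ) => hB θ₀ (hist y t) (act y t)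
  refine (norm_add_smulRight_self_le hH hD).trans_eq ?_
  simp only [card_univ, Fintype.card_fin, Nat.cast_add, Nat.cast_one]
  ring

/-- Hessian formula and Lipschitz-smoothness of conditional entropy:
suppose `P_θ(y) = g(y) · ∏_{t=0}^T π_θ(a_t(y) | h_t(y))` for a `θ`-independent positive
factor `g` (so the posteriors, and hence the posterior entropies `h(y) = H(S₀|Y=y)`,
are independent of `θ`). Then the Hessian of `H(S₀|Y;θ) = ∑_y P_θ(y) h(y)` satisfies
`∇²_θ H = E_{y~P_θ}[ h(y) (∇²_θ log P_θ(y) + ∇_θ log P_θ(y) ∇_θ log P_θ(y)ᵀ) ]`;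
and if moreover `‖∇_θ log π_θ(a|h)‖ ≤ B`, `‖∇²_θ log π_θ(a|h)‖ ≤ C` uniformly and
`0 ≤ h(y) ≤ log |S₀|`, then
`‖∇²_θ H‖ ≤ log|S₀| · ((T+1)·C + (T+1)²·B²)`, so `H(S₀|Y;θ)` is Lipschitz-smooth. -/
theorem hessian_condEntropy {d T : ℕ} {Y Hist Act S₀ : Type*} [Fintype Y] [Fintype S₀]
    (g : Y → ℝ) (hg : ∀ y, 0 < g y)
    (hist : Y → Fin (T+1) → Hist) (act : Y → Fin (T+1) → Act)
    (π : EuclideanSpace ℝ (Fin d) → Hist → Act → ℝ)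
    (hπ_pos : ∀ θ h a, 0 < π θ h a)
    (hπ_C2 : ∀ h a, ContDiff ℝ 2 (fun θ => π θ h a))
    (hp_sum : ∀ θ, ∑ y, g y * ∏ t, π θ (hist y t) (act y t) = 1)
    (hpost : Y → ℝ)
    (hpost_nonneg : ∀ y, 0 ≤ hpost y)
    (hpost_le : ∀ y, hpost y ≤ Real.log (Fintype.card S₀))
    (B C : ℝ) (hB0 : 0 ≤ B) (hC0 : 0 ≤ C)
    (hB : ∀ θ h a, ‖fderiv ℝ (fun θ' => Real.log (π θ' h a)) θ‖ ≤ B)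
    (hC : ∀ θ h a,
      ‖fderiv ℝ (fun θ' => fderiv ℝ (fun θ'' => Real.log (π θ'' h a)) θ') θ‖ ≤ C)
    (θ₀ : EuclideanSpace ℝ (Fin d)) :
    (fderiv ℝ (fun θ => fderiv ℝ
        (fun θ' => ∑ y, (g y * ∏ t, π θ' (hist y t) (act y t)) * hpost y) θ) θ₀ =
      ∑ y, ((g y * ∏ t, π θ₀ (hist y t) (act y t)) * hpost y) •
        (fderiv ℝ (fun θ => fderiv ℝ
            (fun θ' => Real.log (g y * ∏ t, π θ' (hist y t) (act y t))) θ) θ₀ +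
          (fderiv ℝ (fun θ' => Real.log (g y * ∏ t, π θ' (hist y t) (act y t))) θ₀).smulRight
            (fderiv ℝ (fun θ' => Real.log (g y * ∏ t, π θ' (hist y t) (act y t))) θ₀))) ∧
    ‖fderiv ℝ (fun θ => fderiv ℝ
        (fun θ' => ∑ y, (g y * ∏ t, π θ' (hist y t) (act y t)) * hpost y) θ) θ₀‖ ≤
      Real.log (Fintype.card S₀) *
        (((T : ℝ) + 1) * C + ((T : ℝ) + 1) ^ 2 * B ^ 2) :=
  hessian_condEntropy_general g hg hist act π hπ_pos hπ_C2 hp_sum hpost hpost_nonneg hpost_le B C hB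
    hC θ₀
end
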